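/- arXiv:1701.00908 — 2 statements merged into one kernel-verified Lean document; each statement's English description precedes it below -/
import Mathlib

section
/- Every maximal subgroup of H_{p,t,s} is equal to ⟨a b^j, b^p, c⟩ for some j ∈ {0, 1, ..., p-1} or to ⟨a^p, b, c⟩; the former is isomorphic to Z_{p^t} × Z_{p^{s-1}} × Z_p and the latter to Z_{p^{t-1}} × Z_{p^s} × Z_p. -/
open scoped commutatorElement

/-- Relations for the inner-abelian non-metacyclic p-group
`H_{p,t,s} = ⟨a, b, c | a^(p^t) = b^(p^s) = c^p = 1, [a,b] = c, [c,a] = [c,b] = 1⟩`. -/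
def HRels (p t s : ℕ) : Set (FreeGroup (Fin 3)) :=
  {FreeGroup.of (0 : Fin 3) ^ p ^ t, FreeGroup.of (1 : Fin 3) ^ p ^ s, FreeGroup.of (2 : Fin 3) ^ p,
   ⁅FreeGroup.of (0 : Fin 3), FreeGroup.of (1 : Fin 3)⁆ * (FreeGroup.of (2 : Fin 3))⁻¹,
   ⁅FreeGroup.of (2 : Fin 3), FreeGroup.of (0 : Fin 3)⁆, ⁅FreeGroup.of (2 : Fin 3), FreeGroup.of (1 : Fin 3)⁆}

/-- The group `H_{p,t,s}` as a presented group. -/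
abbrev Hgrp (p t s : ℕ) := PresentedGroup (HRels p t s)

/-- The generator `a` of `H_{p,t,s}`. -/
def aa (p t s : ℕ) : Hgrp p t s := PresentedGroup.of (0 : Fin 3)

/-- The generator `b` of `H_{p,t,s}`. -/
def bb (p t s : ℕ) : Hgrp p t s := PresentedGroup.of (1 : Fin 3)

/-- The generator `c = [a,b]` of `H_{p,t,s}`. -/
def cc (p t s : ℕ) : Hgrp p t s := PresentedGroup.of (2 : Fin 3)

/-!
Realize `H_{p,t,s}` as the Heisenberg-type group on `ZMod (p^t) × ZMod (p^s) × ZMod p` with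
`(x, y, z) (x', y', z') = (x + x', y + y', z + z' + ½ (x̄ ȳ' - x̄' ȳ))`, where bars denote
reduction mod `p` (so `p` must be odd). The presentation maps onto this model, and the normal form
`a^i b^j c^k` bounds `|H_{p,t,s}|` by `p^(t+s+1)`, so the map is an isomorphism. Because the
cocycle is antisymmetric, `(i, m, k) ↦ (i, j i + p m, k + ½ j ī)` and `(i, m, k) ↦ (p i, m, k)`
are injective homomorphisms from `Z_{p^t} × Z_{p^(s-1)} × Z_p` and `Z_{p^(t-1)} × Z_{p^s} × Z_p`
onto `⟨a b^j, b^p, c⟩` and `⟨a^p, b, c⟩`, both of index `p`.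

A maximal subgroup `M` of a finite `p`-group is normal of index `p`, so it contains `c = [a, b]`
and all `p`-th powers. If `b ∈ M` then `⟨a^p, b, c⟩ ≤ M`; otherwise `b` generates `G ⧸ M` and
`a b^j ∈ M` for some `j < p`, so `⟨a b^j, b^p, c⟩ ≤ M`. Equal indices force equality.
-/

section MaximalSubgroups

variable {G : Type*} [Group G]

lemma Subgroup.eq_of_le_of_index_eq {H K : Subgroup G} (hle : H ≤ K) (h : H.index = K.index)
    (hK : K.index ≠ 0) : H = K := by
  have := Subgroup.relIndex_mul_index hle
  rw [h, Nat.mul_eq_right hK, Subgroup.relIndex_eq_one] at this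
  exact le_antisymm hle this

lemma Subgroup.index_eq_of_card_mul_eq [Finite G] {K : Subgroup G} {n : ℕ}
    (h : Nat.card K * n = Nat.card G) : K.index = n :=
  Nat.eq_of_mul_eq_mul_left Nat.card_pos (K.card_mul_index.trans h.symm)

theorem IsPGroup.index_eq_of_isCoatom [Finite G] {p : ℕ} [hp : Fact p.Prime] (hG : IsPGroup p G)
    {M : Subgroup G} (hM : IsCoatom M) : M.index = p := by
  obtain ⟨n, hn⟩ := (hG.to_subgroup M).exists_card_eq
  obtain ⟨m, hm⟩ := hG.exists_card_eq
  have hmul : p ^ n * M.index = p ^ m := by rw [← hn, ← hm, M.card_mul_index]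
  have hlt : n < m := by
    refine (Nat.pow_lt_pow_iff_right hp.out.one_lt).mp ?_
    rw [← hmul]
    exact lt_mul_of_one_lt_right (pow_pos hp.out.pos n) (M.one_lt_index_of_ne_top hM.1)
  -- a subgroup of order `p^(n+1)` above `M` must be `⊤` by maximality
  obtain ⟨K, hK, hMK⟩ := Sylow.exists_subgroup_card_pow_succ
    (hm ▸ pow_dvd_pow p hlt : p ^ (n + 1) ∣ Nat.card G) hn
  have hKtop : K = ⊤ := hM.2 K <| lt_of_le_of_ne hMK <| by
    rintro rfl
    exact n.succ_ne_self (Nat.pow_right_injective hp.out.two_le (hK.symm.trans hn))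
  rw [hKtop, Subgroup.card_top, hm] at hK
  rw [hK, pow_succ] at hmul
  exact Nat.eq_of_mul_eq_mul_left (pow_pos hp.out.pos n) hmul

lemma Subgroup.commutatorElement_mem_of_index_prime {M : Subgroup G} [M.Normal]
    (hM : M.index.Prime) (g h : G) : ⁅g, h⁆ ∈ M := by
  have : Fact (Nat.card (G ⧸ M)).Prime := ⟨hM⟩
  have : IsCyclic (G ⧸ M) := isCyclic_of_prime_card rfl
  let _ : CommGroup (G ⧸ M) := IsCyclic.commGroup
  rw [← QuotientGroup.eq_one_iff, ← QuotientGroup.mk'_apply, map_commutatorElement,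
    commutatorElement_eq_one_iff_commute]
  exact mul_comm _ _

lemma Subgroup.exists_mul_pow_mem_of_index_prime {M : Subgroup G} [M.Normal]
    (hM : M.index.Prime) (a : G) {b : G} (hb : b ∉ M) : ∃ j < M.index, a * b ^ j ∈ M := by
  have : Fact (Nat.card (G ⧸ M)).Prime := ⟨hM⟩
  have hb' : (b : G ⧸ M) ≠ 1 := by rwa [Ne, QuotientGroup.eq_one_iff]
  obtain ⟨n, hn⟩ := Submonoid.mem_powers_iff _ _ |>.mp
    (mem_powers_of_prime_card (g' := (a : G ⧸ M)⁻¹) rfl hb')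
  refine ⟨n % M.index, Nat.mod_lt _ hM.pos, ?_⟩
  rw [← QuotientGroup.eq_one_iff, QuotientGroup.mk_mul, QuotientGroup.mk_pow, M.index_eq_card,
    pow_mod_natCard, hn, mul_inv_cancel]

theorem IsPGroup.isCoatom_eq_closure_or [Finite G] {p : ℕ} [hp : Fact p.Prime]
    (hG : IsPGroup p G) {M : Subgroup G} (hM : IsCoatom M) {a b c : G} (habc : ⁅a, b⁆ = c)
    (h₁ : ∀ j, (Subgroup.closure {a * b ^ j, b ^ p, c}).index = p)
    (h₂ : (Subgroup.closure {a ^ p, b, c}).index = p) :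
    (∃ j < p, M = Subgroup.closure {a * b ^ j, b ^ p, c}) ∨
      M = Subgroup.closure {a ^ p, b, c} := by
  have hindex := hG.index_eq_of_isCoatom hM
  have : Group.IsNilpotent G := hG.isNilpotent
  have : M.Normal :=
    Subgroup.NormalizerCondition.normal_of_coatom M Group.normalizerCondition_of_isNilpotent hM
  have hprime : M.index.Prime := hindex ▸ hp.out
  have hpow (g : G) : g ^ p ∈ M := hindex ▸ M.pow_index_mem g
  have hc : c ∈ M := habc ▸ M.commutatorElement_mem_of_index_prime hprime a b
  have heq {K : Subgroup G} (hK : K.index = p) (hle : K ≤ M) : M = K :=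
    (Subgroup.eq_of_le_of_index_eq hle (hK.trans hindex.symm) (hindex ▸ hp.out.ne_zero)).symm
  by_cases hb : b ∈ M
  · right
    refine heq h₂ ?_
    simp only [Subgroup.closure_le, Set.insert_subset_iff, Set.singleton_subset_iff,
      SetLike.mem_coe]
    exact ⟨hpow a, hb, hc⟩
  · left
    obtain ⟨j, hj, hab⟩ := M.exists_mul_pow_mem_of_index_prime hprime a hb
    refine ⟨j, hindex ▸ hj, heq (h₁ j) ?_⟩
    simp only [Subgroup.closure_le, Set.insert_subset_iff, Set.singleton_subset_iff,
      SetLike.mem_coe]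
    exact ⟨hab, hpow b, hc⟩

end MaximalSubgroups

lemma zpow_eq_pow_val_intCast {G : Type*} [Group G] {g : G} {n : ℕ} [NeZero n] (hg : g ^ n = 1)
    (i : ℤ) : g ^ i = g ^ (i : ZMod n).val := by
  rw [← zpow_natCast, zpow_eq_zpow_iff_modEq]
  refine Int.ModEq.of_dvd (Int.natCast_dvd_natCast.mpr (orderOf_dvd_of_pow_eq_one hg)) ?_
  rw [← ZMod.intCast_eq_intCast_iff]
  simp

lemma closure_ofAdd_basis_eq_top (l m n : ℕ) :
    Subgroup.closure {Multiplicative.ofAdd ((1, 0, 0) : ZMod l × ZMod m × ZMod n),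
      Multiplicative.ofAdd (0, 1, 0), Multiplicative.ofAdd (0, 0, 1)} = ⊤ := by
  refine (Subgroup.eq_top_iff' _).mpr fun u => ?_
  have hu : u =
      Multiplicative.ofAdd ((1, 0, 0) : ZMod l × ZMod m × ZMod n) ^ (u.toAdd.1.cast : ℤ) *
      Multiplicative.ofAdd (0, 1, 0) ^ (u.toAdd.2.1.cast : ℤ) *
      Multiplicative.ofAdd (0, 0, 1) ^ (u.toAdd.2.2.cast : ℤ) := by
    apply Multiplicative.toAdd.injective
    ext <;> simp
  rw [hu]
  refine mul_mem (mul_mem ?_ ?_) ?_ <;> exact zpow_mem (Subgroup.subset_closure (by simp)) _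

lemma MonoidHom.range_eq_closure_basis {l m n : ℕ} {H : Type*} [Group H]
    (φ : Multiplicative (ZMod l × ZMod m × ZMod n) →* H) :
    φ.range = Subgroup.closure {φ (Multiplicative.ofAdd (1, 0, 0)),
      φ (Multiplicative.ofAdd (0, 1, 0)), φ (Multiplicative.ofAdd (0, 0, 1))} := by
  rw [φ.range_eq_map, ← closure_ofAdd_basis_eq_top, MonoidHom.map_closure, Set.image_insert_eq,
    Set.image_insert_eq, Set.image_singleton]

noncomputable def MulEquiv.closureEquivOfRangeEq {G H K : Type*} [Group G] [Group H] [Group K]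
    (e : G ≃* H) {S : Set G} {φ : K →* H} (hφ : Function.Injective φ)
    (h : φ.range = Subgroup.closure (e '' S)) : Subgroup.closure S ≃* K :=
  (e.subgroupMap _).trans <|
    (MulEquiv.subgroupCongr (by rw [h, MonoidHom.map_closure]; rfl)).trans
      (MonoidHom.ofInjective hφ).symm

namespace ZMod

variable {m N : ℕ}

def scaleHom (n : ℕ) (h : n * m = N) : ZMod m →+ ZMod N :=
  lift m ⟨(n : ℤ) • Int.castAddHom (ZMod N), by simp [← Nat.cast_mul, h]⟩

lemma scaleHom_intCast (n : ℕ) (h : n * m = N) (k : ℤ) : scaleHom n h k = n * k := by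
  simp [scaleHom, lift_coe]

lemma scaleHom_one (n : ℕ) (h : n * m = N) : scaleHom n h 1 = n := by
  simpa using scaleHom_intCast n h 1

lemma scaleHom_injective {n : ℕ} (hn : n ≠ 0) (h : n * m = N) :
    Function.Injective (scaleHom n h) := by
  rw [injective_iff_map_eq_zero]
  intro x hx
  obtain ⟨k, rfl⟩ := intCast_surjective x
  rw [scaleHom_intCast, ← Int.cast_natCast, ← Int.cast_mul, intCast_zmod_eq_zero_iff_dvd, ← h,
    Nat.cast_mul] at hx
  rw [intCast_zmod_eq_zero_iff_dvd]
  exact Int.dvd_of_mul_dvd_mul_left (by exact_mod_cast hn) hx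

lemma castHom_scaleHom {d n : ℕ} (hd : d ∣ N) (hdn : d ∣ n) (h : n * m = N) (x : ZMod m) :
    castHom hd (ZMod d) (scaleHom n h x) = 0 := by
  obtain ⟨k, rfl⟩ := intCast_surjective x
  rw [scaleHom_intCast, map_mul, map_natCast, (natCast_eq_zero_iff _ _).mpr hdn, zero_mul]

lemma castHom_castHom {d n : ℕ} (hd : d ∣ m) (hm : m ∣ n) (x : ZMod n) :
    castHom hd (ZMod d) (castHom hm (ZMod m) x) = castHom (hd.trans hm) (ZMod d) x :=
  RingHom.congr_fun (castHom_comp hd hm) x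

lemma two_mul_inv_two (hodd : Odd m) : (2 : ZMod m) * 2⁻¹ = 1 := by
  exact_mod_cast coe_mul_inv_eq_one 2 (Nat.coprime_two_left.mpr hodd)

end ZMod

def halfMulForm {m n p : ℕ} (hm : p ∣ m) (hn : p ∣ n) : ZMod m →+ ZMod n →+ ZMod p :=
  AddMonoidHom.mk' (fun x => (AddMonoidHom.mulLeft ((2 : ZMod p)⁻¹ * ZMod.castHom hm _ x)).comp
      (ZMod.castHom hn (ZMod p)).toAddMonoidHom)
    fun x x' => by
      ext y
      simp only [AddMonoidHom.comp_apply, AddMonoidHom.add_apply, AddMonoidHom.coe_mulLeft,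
        map_add]
      ring

lemma halfMulForm_apply {m n p : ℕ} (hm : p ∣ m) (hn : p ∣ n) (x : ZMod m) (y : ZMod n) :
    halfMulForm hm hn x y = (2 : ZMod p)⁻¹ * ZMod.castHom hm _ x * ZMod.castHom hn _ y := rfl

@[ext]
structure Heisenberg {A B C : Type*} [AddCommGroup A] [AddCommGroup B] [AddCommGroup C]
    (β : A →+ B →+ C) where
  x : A
  y : B
  z : C

namespace Heisenberg

variable {A B C : Type*} [AddCommGroup A] [AddCommGroup B] [AddCommGroup C] {β : A →+ B →+ C}

instance : Mul (Heisenberg β) :=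
  ⟨fun v w => ⟨v.x + w.x, v.y + w.y, v.z + w.z + β v.x w.y - β w.x v.y⟩⟩

instance : One (Heisenberg β) := ⟨⟨0, 0, 0⟩⟩

instance : Inv (Heisenberg β) := ⟨fun v => ⟨-v.x, -v.y, -v.z⟩⟩

@[simp] lemma mul_x (v w : Heisenberg β) : (v * w).x = v.x + w.x := rfl
@[simp] lemma mul_y (v w : Heisenberg β) : (v * w).y = v.y + w.y := rfl
@[simp] lemma mul_z (v w : Heisenberg β) : (v * w).z = v.z + w.z + β v.x w.y - β w.x v.y := rfl
@[simp] lemma one_x : (1 : Heisenberg β).x = 0 := rfl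
@[simp] lemma one_y : (1 : Heisenberg β).y = 0 := rfl
@[simp] lemma one_z : (1 : Heisenberg β).z = 0 := rfl
@[simp] lemma inv_x (v : Heisenberg β) : v⁻¹.x = -v.x := rfl
@[simp] lemma inv_y (v : Heisenberg β) : v⁻¹.y = -v.y := rfl
@[simp] lemma inv_z (v : Heisenberg β) : v⁻¹.z = -v.z := rfl

instance : Group (Heisenberg β) where
  mul_assoc u v w := by ext <;> simp <;> abel
  one_mul v := by ext <;> simp
  mul_one v := by ext <;> simp
  inv_mul_cancel v := by ext <;> simp

def equivProd : Heisenberg β ≃ A × B × C where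
  toFun v := (v.x, v.y, v.z)
  invFun w := ⟨w.1, w.2.1, w.2.2⟩

lemma card_eq : Nat.card (Heisenberg β) = Nat.card (A × B × C) := Nat.card_congr equivProd

-- the cocycle vanishes on the diagonal, so powers are taken coordinatewise
lemma pow_eq (v : Heisenberg β) (n : ℕ) : v ^ n = ⟨n • v.x, n • v.y, n • v.z⟩ := by
  induction n with
  | zero => ext <;> simp
  | succ n ih => ext <;> simp [pow_succ, ih, succ_nsmul]

lemma commutatorElement_eq (v w : Heisenberg β) :
    ⁅v, w⁆ = ⟨0, 0, 2 • (β v.x w.y - β w.x v.y)⟩ := by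
  ext <;> simp [commutatorElement_def]
  abel

lemma eq_mul_mul (v : Heisenberg β) :
    v = ⟨v.x, 0, 0⟩ * ⟨0, v.y, 0⟩ * ⟨0, 0, v.z - β v.x v.y⟩ := by
  ext <;> simp

variable {G : Type*} [AddCommGroup G]

def mkHom (f : G →+ A) (g : G →+ B) (h : G →+ C)
    (hfg : ∀ u v, β (f u) (g v) = β (f v) (g u)) : Multiplicative G →* Heisenberg β where
  toFun u := ⟨f u.toAdd, g u.toAdd, h u.toAdd⟩
  map_one' := by ext <;> simp
  map_mul' u v := by ext <;> simp [hfg u.toAdd v.toAdd]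

@[simp] lemma mkHom_apply (f : G →+ A) (g : G →+ B) (h : G →+ C) (hfg)
    (u : Multiplicative G) : mkHom (β := β) f g h hfg u = ⟨f u.toAdd, g u.toAdd, h u.toAdd⟩ :=
  rfl

lemma mkHom_injective {f : G →+ A} {g : G →+ B} {h : G →+ C} {hfg}
    (hinj : ∀ u, f u = 0 → g u = 0 → h u = 0 → u = 0) :
    Function.Injective (mkHom (β := β) f g h hfg) := by
  rw [injective_iff_map_eq_one]
  intro u hu
  exact congrArg Multiplicative.ofAdd
    (hinj u.toAdd (congrArg x hu) (congrArg y hu) (congrArg z hu))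

end Heisenberg

namespace Hgrp

variable {p t s : ℕ}

lemma aa_pow_eq_one : aa p t s ^ p ^ t = 1 := by
  have := PresentedGroup.one_of_mem (x := FreeGroup.of (0 : Fin 3) ^ p ^ t)
    (show _ ∈ HRels p t s by simp [HRels])
  rwa [map_pow] at this

lemma bb_pow_eq_one : bb p t s ^ p ^ s = 1 := by
  have := PresentedGroup.one_of_mem (x := FreeGroup.of (1 : Fin 3) ^ p ^ s)
    (show _ ∈ HRels p t s by simp [HRels])
  rwa [map_pow] at this

lemma cc_pow_eq_one : cc p t s ^ p = 1 := by
  have := PresentedGroup.one_of_mem (x := FreeGroup.of (2 : Fin 3) ^ p)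
    (show _ ∈ HRels p t s by simp [HRels])
  rwa [map_pow] at this

lemma commutatorElement_aa_bb : ⁅aa p t s, bb p t s⁆ = cc p t s := by
  have := PresentedGroup.one_of_mem
    (x := ⁅FreeGroup.of (0 : Fin 3), FreeGroup.of 1⁆ * (FreeGroup.of 2)⁻¹)
    (show _ ∈ HRels p t s by simp [HRels])
  rwa [map_mul, map_inv, map_commutatorElement, mul_inv_eq_one] at this

lemma commute_cc (g : Hgrp p t s) : Commute (cc p t s) g := by
  have hrel (i : Fin 3) : ⁅FreeGroup.of (2 : Fin 3), FreeGroup.of i⁆ ∈ HRels p t s →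
      Commute (cc p t s) (PresentedGroup.of i) := fun h => by
    have := PresentedGroup.one_of_mem h
    rwa [map_commutatorElement, commutatorElement_eq_one_iff_commute] at this
  have : g ∈ Subgroup.centralizer {cc p t s} := by
    refine PresentedGroup.generated_by _ _ (fun i => ?_) g
    refine Subgroup.mem_centralizer_singleton_iff.mpr (Eq.symm (Commute.eq ?_))
    fin_cases i
    · exact hrel 0 (by simp [HRels])
    · exact hrel 1 (by simp [HRels])
    · exact Commute.refl _
  exact (Subgroup.mem_centralizer_singleton_iff.mp this).symm

lemma zpow_bb_mul_zpow_aa (m n : ℤ) :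
    bb p t s ^ m * aa p t s ^ n = aa p t s ^ n * bb p t s ^ m * cc p t s ^ (-(m * n)) := by
  have hab : SemiconjBy (aa p t s) (bb p t s) (cc p t s * bb p t s) := by
    rw [SemiconjBy, ← commutatorElement_aa_bb, commutatorElement_def]
    group
  have habm : aa p t s * bb p t s ^ m = cc p t s ^ m * bb p t s ^ m * aa p t s := by
    rw [← ((commute_cc (bb p t s)).mul_zpow m), (hab.zpow_right m).eq]
  have hbma : SemiconjBy (bb p t s ^ m) (aa p t s) (aa p t s * cc p t s ^ (-m)) := by
    calc bb p t s ^ m * aa p t s = cc p t s ^ (-m) * (cc p t s ^ m * bb p t s ^ m * aa p t s) := by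
          group
      _ = aa p t s * cc p t s ^ (-m) * bb p t s ^ m := by
          rw [← habm, ← mul_assoc, ((commute_cc _).zpow_left (-m)).eq]
  rw [(hbma.zpow_right n).eq, ((commute_cc _).zpow_left (-m)).symm.mul_zpow, ← zpow_mul,
    mul_assoc, ((commute_cc _).zpow_left _).eq, ← mul_assoc, neg_mul]

lemma exists_eq_zpow_mul_zpow_mul_zpow (g : Hgrp p t s) :
    ∃ i j k : ℤ, g = aa p t s ^ i * bb p t s ^ j * cc p t s ^ k := by
  have hmem : g ∈ Subgroup.closure (Set.range PresentedGroup.of) := by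
    rw [PresentedGroup.closure_range_of]; trivial
  have step (x : Hgrp p t s) (hx : x ∈ Set.range PresentedGroup.of) (e : ℤ) (y : Hgrp p t s)
      (hy : ∃ i j k : ℤ, y = aa p t s ^ i * bb p t s ^ j * cc p t s ^ k) :
      ∃ i j k : ℤ, x ^ e * y = aa p t s ^ i * bb p t s ^ j * cc p t s ^ k := by
    obtain ⟨l, rfl⟩ := hx
    obtain ⟨i, j, k, rfl⟩ := hy
    fin_cases l
    · exact ⟨e + i, j, k, by change aa p t s ^ e * _ = _; group⟩
    · refine ⟨i, e + j, -(e * i) + k, ?_⟩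
      change bb p t s ^ e * _ = _
      rw [← mul_assoc, ← mul_assoc, zpow_bb_mul_zpow_aa,
        mul_assoc (aa p t s ^ i * bb p t s ^ e), ((commute_cc _).zpow_left _).eq]
      group
    · refine ⟨i, j, e + k, ?_⟩
      change cc p t s ^ e * _ = _
      rw [((commute_cc _).zpow_left e).eq]
      group
  induction hmem using Subgroup.closure_induction_left with
  | one => exact ⟨0, 0, 0, by simp⟩
  | mul_left x hx y _ ih => simpa using step x hx 1 y ih
  | inv_mul_cancel x hx y _ ih => simpa using step x hx (-1) y ih

abbrev Model (p t s : ℕ) (ht : t ≠ 0) (hs : s ≠ 0) :=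
  Heisenberg (halfMulForm (dvd_pow_self p ht) (dvd_pow_self p hs))

def toModel (ht : t ≠ 0) (hs : s ≠ 0) (hodd : Odd p) : Hgrp p t s →* Model p t s ht hs :=
  PresentedGroup.toGroup (f := ![⟨1, 0, 0⟩, ⟨0, 1, 0⟩, ⟨0, 0, 1⟩]) <| by
    intro r hr
    simp only [HRels, Set.mem_insert_iff, Set.mem_singleton_iff] at hr
    rcases hr with rfl | rfl | rfl | rfl | rfl | rfl <;> ext <;>
      simp [Heisenberg.pow_eq, Heisenberg.commutatorElement_eq, halfMulForm_apply,
        -ZMod.castHom_apply]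
    linear_combination ZMod.two_mul_inv_two hodd

lemma surjective_pow_val [NeZero p] :
    Function.Surjective fun v : ZMod (p ^ t) × ZMod (p ^ s) × ZMod p =>
      aa p t s ^ v.1.val * bb p t s ^ v.2.1.val * cc p t s ^ v.2.2.val := by
  intro g
  obtain ⟨i, j, k, rfl⟩ := exists_eq_zpow_mul_zpow_mul_zpow g
  exact ⟨(i, j, k), by simp only [← zpow_eq_pow_val_intCast aa_pow_eq_one,
    ← zpow_eq_pow_val_intCast bb_pow_eq_one, ← zpow_eq_pow_val_intCast cc_pow_eq_one]⟩

instance [NeZero p] : Finite (Hgrp p t s) := Finite.of_surjective _ surjective_pow_val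

@[simp] lemma toModel_aa (ht : t ≠ 0) (hs : s ≠ 0) (hodd : Odd p) :
    toModel ht hs hodd (aa p t s) = ⟨1, 0, 0⟩ := PresentedGroup.toGroup.of _

@[simp] lemma toModel_bb (ht : t ≠ 0) (hs : s ≠ 0) (hodd : Odd p) :
    toModel ht hs hodd (bb p t s) = ⟨0, 1, 0⟩ := PresentedGroup.toGroup.of _

@[simp] lemma toModel_cc (ht : t ≠ 0) (hs : s ≠ 0) (hodd : Odd p) :
    toModel ht hs hodd (cc p t s) = ⟨0, 0, 1⟩ := PresentedGroup.toGroup.of _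

lemma toModel_surjective [NeZero p] (ht : t ≠ 0) (hs : s ≠ 0) (hodd : Odd p) :
    Function.Surjective (toModel ht hs hodd) := by
  intro v
  refine ⟨aa p t s ^ v.x.val * bb p t s ^ v.y.val *
    cc p t s ^ (v.z - halfMulForm (dvd_pow_self p ht) (dvd_pow_self p hs) v.x v.y).val, ?_⟩
  conv_rhs => rw [Heisenberg.eq_mul_mul v]
  simp [Heisenberg.pow_eq]

noncomputable def equivModel [NeZero p] (ht : t ≠ 0) (hs : s ≠ 0) (hodd : Odd p) :
    Hgrp p t s ≃* Model p t s ht hs :=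
  MulEquiv.ofBijective (toModel ht hs hodd) <|
    (toModel_surjective ht hs hodd).bijective_of_nat_card_le <|
      (Nat.card_le_card_of_surjective _ surjective_pow_val).trans_eq Heisenberg.card_eq.symm

def modelHom₁ (ht : t ≠ 0) (hs : s ≠ 0) (hts : s ≤ t) (j : ℕ) :
    Multiplicative (ZMod (p ^ t) × ZMod (p ^ (s - 1)) × ZMod p) →* Model p t s ht hs :=
  Heisenberg.mkHom (AddMonoidHom.fst _ _)
    (j • (ZMod.castHom (pow_dvd_pow p hts) (ZMod (p ^ s))).toAddMonoidHom.comp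
        (AddMonoidHom.fst _ _) +
      (ZMod.scaleHom p (mul_pow_sub_one hs p)).comp
        ((AddMonoidHom.fst _ _).comp (AddMonoidHom.snd _ _)))
    (((halfMulForm (dvd_pow_self p ht) (dvd_pow_self p hs)).flip (j : ZMod (p ^ s))).comp
        (AddMonoidHom.fst _ _) +
      (AddMonoidHom.snd _ _).comp (AddMonoidHom.snd _ _))
    (fun u v => by
      simp [halfMulForm_apply, ZMod.castHom_castHom, ZMod.castHom_scaleHom, -ZMod.castHom_apply]
      ring)

def modelHom₂ (ht : t ≠ 0) (hs : s ≠ 0) :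
    Multiplicative (ZMod (p ^ (t - 1)) × ZMod (p ^ s) × ZMod p) →* Model p t s ht hs :=
  Heisenberg.mkHom ((ZMod.scaleHom p (mul_pow_sub_one ht p)).comp (AddMonoidHom.fst _ _))
    ((AddMonoidHom.fst _ _).comp (AddMonoidHom.snd _ _))
    ((AddMonoidHom.snd _ _).comp (AddMonoidHom.snd _ _))
    (fun u v => by simp [halfMulForm_apply, ZMod.castHom_scaleHom, -ZMod.castHom_apply])

lemma modelHom₁_injective [NeZero p] (ht : t ≠ 0) (hs : s ≠ 0) (hts : s ≤ t) (j : ℕ) :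
    Function.Injective (modelHom₁ (p := p) ht hs hts j) :=
  Heisenberg.mkHom_injective fun ⟨x, y, z⟩ hx hy hz => by
    simp only [AddMonoidHom.coe_fst] at hx
    subst hx
    have hy : y = 0 :=
      (map_eq_zero_iff _ (ZMod.scaleHom_injective (NeZero.ne p) _)).mp (by simpa using hy)
    simp_all

lemma modelHom₂_injective [NeZero p] (ht : t ≠ 0) (hs : s ≠ 0) :
    Function.Injective (modelHom₂ (p := p) ht hs) :=
  Heisenberg.mkHom_injective fun ⟨x, y, z⟩ hx hy hz => by
    have hx : x = 0 :=
      (map_eq_zero_iff _ (ZMod.scaleHom_injective (NeZero.ne p) _)).mp (by simpa using hx)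
    simp_all

lemma range_modelHom₁ (ht : t ≠ 0) (hs : s ≠ 0) (hts : s ≤ t) (hodd : Odd p) (j : ℕ) :
    (modelHom₁ ht hs hts j).range =
      Subgroup.closure
        (toModel ht hs hodd '' {aa p t s * bb p t s ^ j, bb p t s ^ p, cc p t s}) := by
  rw [MonoidHom.range_eq_closure_basis, Set.image_insert_eq, Set.image_insert_eq,
    Set.image_singleton]
  refine congrArg _ (congrArg₂ _ ?_ (congrArg₂ _ ?_ (congrArg _ ?_))) <;>
    ext <;> simp [modelHom₁, Heisenberg.pow_eq, ZMod.scaleHom_one, -ZMod.castHom_apply]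

lemma range_modelHom₂ (ht : t ≠ 0) (hs : s ≠ 0) (hodd : Odd p) :
    (modelHom₂ ht hs).range =
      Subgroup.closure (toModel ht hs hodd '' {aa p t s ^ p, bb p t s, cc p t s}) := by
  rw [MonoidHom.range_eq_closure_basis, Set.image_insert_eq, Set.image_insert_eq,
    Set.image_singleton]
  refine congrArg _ (congrArg₂ _ ?_ (congrArg₂ _ ?_ (congrArg _ ?_))) <;>
    ext <;> simp [modelHom₂, Heisenberg.pow_eq, ZMod.scaleHom_one]

noncomputable def closureEquiv₁ [NeZero p] (hodd : Odd p) (hs : s ≠ 0) (hts : s ≤ t) (j : ℕ) :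
    Subgroup.closure {aa p t s * bb p t s ^ j, bb p t s ^ p, cc p t s} ≃*
      Multiplicative (ZMod (p ^ t) × ZMod (p ^ (s - 1)) × ZMod p) :=
  have ht : t ≠ 0 := by omega
  MulEquiv.closureEquivOfRangeEq (equivModel ht hs hodd) (modelHom₁_injective ht hs hts j)
    (range_modelHom₁ ht hs hts hodd j)

noncomputable def closureEquiv₂ [NeZero p] (hodd : Odd p) (ht : t ≠ 0) (hs : s ≠ 0) :
    Subgroup.closure {aa p t s ^ p, bb p t s, cc p t s} ≃*
      Multiplicative (ZMod (p ^ (t - 1)) × ZMod (p ^ s) × ZMod p) :=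
  MulEquiv.closureEquivOfRangeEq (equivModel ht hs hodd) (modelHom₂_injective ht hs)
    (range_modelHom₂ ht hs hodd)

lemma card_eq [NeZero p] (hodd : Odd p) (ht : t ≠ 0) (hs : s ≠ 0) :
    Nat.card (Hgrp p t s) = p ^ t * p ^ s * p := by
  rw [Nat.card_congr (equivModel ht hs hodd).toEquiv, Heisenberg.card_eq]
  simp [mul_assoc]

end Hgrp

theorem stmt6 (p t s : ℕ) (hp : p.Prime) (hodd : Odd p) (hs : 1 ≤ s) (hts : s ≤ t) :
    (∀ M : Subgroup (Hgrp p t s), IsCoatom M →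
      ((∃ j < p, M = Subgroup.closure {aa p t s * bb p t s ^ j, bb p t s ^ p, cc p t s}) ∨
        M = Subgroup.closure {aa p t s ^ p, bb p t s, cc p t s})) ∧
    (∀ j < p, Nonempty
      ((Subgroup.closure {aa p t s * bb p t s ^ j, bb p t s ^ p, cc p t s} : Subgroup (Hgrp p t s)) ≃*
        Multiplicative (ZMod (p ^ t) × ZMod (p ^ (s - 1)) × ZMod p))) ∧
    Nonempty
      ((Subgroup.closure {aa p t s ^ p, bb p t s, cc p t s} : Subgroup (Hgrp p t s)) ≃*
        Multiplicative (ZMod (p ^ (t - 1)) × ZMod (p ^ s) × ZMod p)) := by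
  have : Fact p.Prime := ⟨hp⟩
  have : NeZero p := ⟨hp.ne_zero⟩
  have ht₀ : t ≠ 0 := by omega
  have hs₀ : s ≠ 0 := by omega
  have hcard : Nat.card (Hgrp p t s) = p ^ (t + s + 1) := by
    rw [Hgrp.card_eq hodd ht₀ hs₀, pow_succ, pow_add]
  have index_eq {n m : ℕ} (K : Subgroup (Hgrp p t s))
      (e : K ≃* Multiplicative (ZMod (p ^ n) × ZMod (p ^ m) × ZMod p)) (hnm : n + m + 1 = t + s) :
      K.index = p := by
    refine Subgroup.index_eq_of_card_mul_eq ?_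
    rw [Nat.card_congr e.toEquiv, hcard, ← hnm]
    simp only [Nat.card_congr Multiplicative.toAdd, Nat.card_prod, Nat.card_zmod]
    ring
  refine ⟨fun M hM => ?_, fun j _ => ⟨Hgrp.closureEquiv₁ hodd hs₀ hts j⟩,
    ⟨Hgrp.closureEquiv₂ hodd ht₀ hs₀⟩⟩
  exact (IsPGroup.of_card hcard).isCoatom_eq_closure_or hM Hgrp.commutatorElement_aa_bb
    (fun j => index_eq _ (Hgrp.closureEquiv₁ hodd hs₀ hts j) (by omega))
    (index_eq _ (Hgrp.closureEquiv₂ hodd ht₀ hs₀) (by omega))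
end

section
/- In H = H_{p,t,s}, the elements u = a⁻¹ and v = a^(-k) b⁻¹ a^k (for any integer k) satisfy o(u) = p^t, o(v) = p^s, and ⟨u, v⟩ = H; consequently H has an automorphism β with a^β = a⁻¹ and b^β = a^(-k) b⁻¹ a^k. -/
open scoped commutatorElement

/-!
Every triple `(a, b, c)` of a group satisfying the defining relations yields a homomorphism out of
`H_{p,t,s}`. Mapping onto the cyclic groups `ℤ/p^t` and `ℤ/p^s` (killing `b, c`, resp. `a, c`)
shows that `a` and `b` have the full orders `p^t` and `p^s`; `v` is a conjugate of `b⁻¹`.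
The triple `(a⁻¹, a^(-k) b⁻¹ a^k, c)` again satisfies the relations, so it defines an
endomorphism `β`, and `β ∘ β` fixes `a`, `b`, `c`, so `β` is an involutive automorphism.
Finally `a` and `b` are recovered from `u` and `v`, and `c = [a, b]`.
-/

structure HRelsHold (p t s : ℕ) {G : Type*} [Group G] (a b c : G) : Prop where
  pow_left : a ^ p ^ t = 1
  pow_right : b ^ p ^ s = 1
  pow_commutator : c ^ p = 1
  commutator_eq : ⁅a, b⁆ = c
  commute_left : Commute c a
  commute_right : Commute c b

namespace HRelsHold

variable {p t s : ℕ} {G H : Type*} [Group G] [Group H] {a b c : G}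

theorem map (h : HRelsHold p t s a b c) (f : G →* H) : HRelsHold p t s (f a) (f b) (f c) where
  pow_left := by rw [← map_pow, h.pow_left, map_one]
  pow_right := by rw [← map_pow, h.pow_right, map_one]
  pow_commutator := by rw [← map_pow, h.pow_commutator, map_one]
  commutator_eq := by rw [← map_commutatorElement, h.commutator_eq]
  commute_left := h.commute_left.map f
  commute_right := h.commute_right.map f

theorem of_commute (hab : Commute a b) (ha : a ^ p ^ t = 1) (hb : b ^ p ^ s = 1) :
    HRelsHold p t s a b 1 where
  pow_left := ha
  pow_right := hb
  pow_commutator := one_pow p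
  commutator_eq := commutatorElement_eq_one_iff_commute.mpr hab
  commute_left := Commute.one_left a
  commute_right := Commute.one_left b

theorem inv (h : HRelsHold p t s a b c) : HRelsHold p t s a⁻¹ b⁻¹ c where
  pow_left := by rw [inv_pow, h.pow_left, inv_one]
  pow_right := by rw [inv_pow, h.pow_right, inv_one]
  pow_commutator := h.pow_commutator
  commutator_eq := by
    rw [commutatorElement_inv_left, commutatorElement_inv_left, h.commutator_eq,
      ← h.commute_right.inv_right.eq, inv_mul_cancel_right, ← h.commute_left.inv_right.eq,
      inv_mul_cancel_right]
  commute_left := h.commute_left.inv_right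
  commute_right := h.commute_right.inv_right

/-- The triple `(a⁻¹, a^(-k) b⁻¹ a^k, c)` is the image of `(a⁻¹, b⁻¹, c)` under conjugation by
`a^(-k)`, which fixes `a⁻¹` and `c`. -/
theorem inv_conj (h : HRelsHold p t s a b c) (k : ℤ) :
    HRelsHold p t s a⁻¹ (a ^ (-k) * b⁻¹ * a ^ k) c := by
  have key := h.inv.map (MulAut.conj (a ^ (-k))).toMonoidHom
  simp only [MulEquiv.coe_toMonoidHom, MulAut.conj_apply, zpow_neg, inv_inv] at key ⊢
  rwa [((Commute.refl a).zpow_left k).inv_right.inv_left.eq, inv_mul_cancel_right,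
    ((h.commute_left.zpow_right k).symm.inv_left).eq, inv_mul_cancel_right] at key

theorem lift_eq_one (h : HRelsHold p t s a b c) :
    ∀ r ∈ HRels p t s, FreeGroup.lift ![a, b, c] r = 1 := by
  simp only [HRels, Set.mem_insert_iff, Set.mem_singleton_iff, forall_eq_or_imp, forall_eq,
    map_pow, map_mul, map_inv, map_commutatorElement, FreeGroup.lift_apply_of]
  exact ⟨h.pow_left, h.pow_right, h.pow_commutator, mul_inv_eq_one.mpr h.commutator_eq,
    commutatorElement_eq_one_iff_commute.mpr h.commute_left,
    commutatorElement_eq_one_iff_commute.mpr h.commute_right⟩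

end HRelsHold

theorem Subgroup.closure_inv_conj {G : Type*} [Group G] (a b : G) (k : ℤ) :
    closure {a⁻¹, a ^ (-k) * b⁻¹ * a ^ k} = closure {a, b} := by
  apply le_antisymm <;> rw [closure_le, Set.insert_subset_iff, Set.singleton_subset_iff]
  · have ha : a ∈ closure {a, b} := subset_closure (Set.mem_insert _ _)
    have hb : b ∈ closure {a, b} := subset_closure (Set.mem_insert_of_mem _ rfl)
    exact ⟨inv_mem ha, mul_mem (mul_mem (zpow_mem ha _) (inv_mem hb)) (zpow_mem ha _)⟩
  · have hu : a⁻¹ ∈ closure {a⁻¹, a ^ (-k) * b⁻¹ * a ^ k} := subset_closure (Set.mem_insert _ _)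
    have hv : a ^ (-k) * b⁻¹ * a ^ k ∈ closure {a⁻¹, a ^ (-k) * b⁻¹ * a ^ k} :=
      subset_closure (Set.mem_insert_of_mem _ rfl)
    have ha := inv_mem hu
    rw [inv_inv] at ha
    refine ⟨ha, ?_⟩
    have hb : a ^ k * (a ^ (-k) * b⁻¹ * a ^ k)⁻¹ * a ^ (-k) = b := by group
    have hbmem := mul_mem (mul_mem (zpow_mem ha k) (inv_mem hv)) (zpow_mem ha (-k))
    rwa [hb] at hbmem

namespace Hgrp

variable {p t s : ℕ} {G : Type*} [Group G] {a b c : G}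

theorem hRelsHold : HRelsHold p t s (aa p t s) (bb p t s) (cc p t s) := by
  have rel {r : FreeGroup (Fin 3)} (hr : r ∈ HRels p t s) : PresentedGroup.mk _ r = 1 :=
    PresentedGroup.one_of_mem hr
  simp only [HRels, Set.mem_insert_iff, Set.mem_singleton_iff, forall_eq_or_imp, forall_eq] at rel
  obtain ⟨ha, hb, hc, habc, hca, hcb⟩ := rel
  exact ⟨ha, hb, hc, mul_inv_eq_one.mp habc, commutatorElement_eq_one_iff_commute.mp hca,
    commutatorElement_eq_one_iff_commute.mp hcb⟩

def lift (h : HRelsHold p t s a b c) : Hgrp p t s →* G :=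
  PresentedGroup.toGroup h.lift_eq_one

@[simp] theorem lift_aa (h : HRelsHold p t s a b c) : lift h (aa p t s) = a :=
  PresentedGroup.toGroup.of (x := 0) h.lift_eq_one

@[simp] theorem lift_bb (h : HRelsHold p t s a b c) : lift h (bb p t s) = b :=
  PresentedGroup.toGroup.of (x := 1) h.lift_eq_one

@[simp] theorem lift_cc (h : HRelsHold p t s a b c) : lift h (cc p t s) = c :=
  PresentedGroup.toGroup.of (x := 2) h.lift_eq_one

theorem hom_ext {φ ψ : Hgrp p t s →* G} (ha : φ (aa p t s) = ψ (aa p t s))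
    (hb : φ (bb p t s) = ψ (bb p t s)) (hc : φ (cc p t s) = ψ (cc p t s)) : φ = ψ := by
  ext i
  fin_cases i
  exacts [ha, hb, hc]

theorem orderOf_aa : orderOf (aa p t s) = p ^ t := by
  refine Nat.dvd_antisymm (orderOf_dvd_of_pow_eq_one hRelsHold.pow_left) ?_
  have h : HRelsHold p t s (Multiplicative.ofAdd (1 : ZMod (p ^ t))) 1 1 :=
    .of_commute (Commute.one_right _) (by simp [← ofAdd_nsmul]) (one_pow _)
  simpa [orderOf_ofAdd_eq_addOrderOf] using orderOf_map_dvd (lift h) (aa p t s)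

theorem orderOf_bb : orderOf (bb p t s) = p ^ s := by
  refine Nat.dvd_antisymm (orderOf_dvd_of_pow_eq_one hRelsHold.pow_right) ?_
  have h : HRelsHold p t s 1 (Multiplicative.ofAdd (1 : ZMod (p ^ s))) 1 :=
    .of_commute (Commute.one_left _) (one_pow _) (by simp [← ofAdd_nsmul])
  simpa [orderOf_ofAdd_eq_addOrderOf] using orderOf_map_dvd (lift h) (bb p t s)

theorem closure_aa_bb : Subgroup.closure {aa p t s, bb p t s} = ⊤ := by
  set M := Subgroup.closure {aa p t s, bb p t s}
  have ha : aa p t s ∈ M := Subgroup.subset_closure (Set.mem_insert _ _)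
  have hb : bb p t s ∈ M := Subgroup.subset_closure (Set.mem_insert_of_mem _ rfl)
  have hc : cc p t s ∈ M := by
    rw [← hRelsHold.commutator_eq, commutatorElement_def]
    exact mul_mem (mul_mem (mul_mem ha hb) (inv_mem ha)) (inv_mem hb)
  rw [eq_top_iff, ← PresentedGroup.closure_range_of, Subgroup.closure_le]
  rintro _ ⟨i, rfl⟩
  fin_cases i
  exacts [ha, hb, hc]

def invConj (p t s : ℕ) (k : ℤ) : Hgrp p t s →* Hgrp p t s :=
  lift (hRelsHold.inv_conj k)

theorem invConj_comp_self (k : ℤ) : (invConj p t s k).comp (invConj p t s k) = .id _ :=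
  hom_ext (by simp [invConj]) (by simp [invConj]) (by simp [invConj])

def invConjEquiv (p t s : ℕ) (k : ℤ) : Hgrp p t s ≃* Hgrp p t s :=
  (invConj p t s k).toMulEquiv (invConj p t s k) (invConj_comp_self k) (invConj_comp_self k)

@[simp] theorem invConjEquiv_aa (k : ℤ) : invConjEquiv p t s k (aa p t s) = (aa p t s)⁻¹ := by
  simp [invConjEquiv, invConj]

@[simp] theorem invConjEquiv_bb (k : ℤ) :
    invConjEquiv p t s k (bb p t s) = aa p t s ^ (-k) * (bb p t s)⁻¹ * aa p t s ^ k := by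
  simp [invConjEquiv, invConj]

end Hgrp

theorem stmt15_general (p t s : ℕ) (k : ℤ) :
    orderOf ((aa p t s)⁻¹) = p ^ t ∧
    orderOf (aa p t s ^ (-k) * (bb p t s)⁻¹ * aa p t s ^ k) = p ^ s ∧
    Subgroup.closure {(aa p t s)⁻¹, aa p t s ^ (-k) * (bb p t s)⁻¹ * aa p t s ^ k} =
      (⊤ : Subgroup (Hgrp p t s)) ∧
    ∃ β : Hgrp p t s ≃* Hgrp p t s,
      β (aa p t s) = (aa p t s)⁻¹ ∧
      β (bb p t s) = aa p t s ^ (-k) * (bb p t s)⁻¹ * aa p t s ^ k := by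
  refine ⟨by rw [orderOf_inv, Hgrp.orderOf_aa], ?_, ?_, Hgrp.invConjEquiv p t s k, ?_, ?_⟩
  · have hconj : SemiconjBy (aa p t s ^ (-k)) (bb p t s)⁻¹
        (aa p t s ^ (-k) * (bb p t s)⁻¹ * aa p t s ^ k) := by
      simp [SemiconjBy, mul_assoc]
    rw [← hconj.orderOf_eq, orderOf_inv, Hgrp.orderOf_bb]
  · rw [Subgroup.closure_inv_conj, Hgrp.closure_aa_bb]
  · exact Hgrp.invConjEquiv_aa k
  · exact Hgrp.invConjEquiv_bb k

theorem stmt15 (p t s : ℕ) (hp : p.Prime) (hodd : Odd p) (hs : 1 ≤ s) (hts : s ≤ t)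
    (k : ℤ) :
    orderOf ((aa p t s)⁻¹) = p ^ t ∧
    orderOf (aa p t s ^ (-k) * (bb p t s)⁻¹ * aa p t s ^ k) = p ^ s ∧
    Subgroup.closure {(aa p t s)⁻¹, aa p t s ^ (-k) * (bb p t s)⁻¹ * aa p t s ^ k} =
      (⊤ : Subgroup (Hgrp p t s)) ∧
    ∃ β : Hgrp p t s ≃* Hgrp p t s,
      β (aa p t s) = (aa p t s)⁻¹ ∧
      β (bb p t s) = aa p t s ^ (-k) * (bb p t s)⁻¹ * aa p t s ^ k :=
  stmt15_general p t s k
end
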